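/- Let K be a natural number and let p be an even real polynomial of degree at most 2K satisfying p^{(k)}(1) = (−1)^k · k! for every 0 ≤ k ≤ K. Define κ : (0,∞) → ℝ by κ(s) = 1/s − p(s) for 0 < s < 1 and κ(s) = 0 for s ≥ 1. Then κ is K times continuously differentiable on (0,∞). -/

import Mathlib

/-!
Writing `1/s - p(s) = (1 - s p(s)) / s`, the conditions on `p^{(k)}(1)` say exactly that the
polynomial `1 - X p` vanishes to order `K + 1` at `1`, so `1 - X p = (1 - X)^{K+1} r`. Hence
`κ(s) = max(1 - s, 0)^{K+1} r(s) / s` on `(0, ∞)`, and the truncated power `max(x, 0)^{K+1}`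
is `C^K`.
-/

open Polynomial Asymptotics Topology

theorem hasDerivAt_max_zero_pow {m : ℕ} (hm : m ≠ 0) (x : ℝ) :
    HasDerivAt (fun y : ℝ => max y 0 ^ (m + 1)) ((m + 1) * max x 0 ^ m) x := by
  rcases lt_trichotomy x 0 with hx | rfl | hx
  · have hzero : (fun y : ℝ => max y 0 ^ (m + 1)) =ᶠ[𝓝 x] fun _ => 0 := by
      filter_upwards [eventually_lt_nhds hx] with y hy
      simp [max_eq_right hy.le]
    simpa [max_eq_right hx.le, hm] using (hasDerivAt_const x (0 : ℝ)).congr_of_eventuallyEq hzero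
  · rw [hasDerivAt_iff_isLittleO_nhds_zero]
    simp only [zero_add, max_self, zero_pow m.succ_ne_zero, zero_pow hm, mul_zero, sub_zero,
      smul_zero]
    refine (isBigO_of_le _ fun h => ?_).trans_isLittleO (isLittleO_pow_id (n := m + 1) (by omega))
    rw [norm_pow, norm_pow, Real.norm_of_nonneg (le_max_right h 0)]
    exact pow_le_pow_left₀ (le_max_right h 0) (max_le (le_abs_self h) (abs_nonneg h)) _
  · have hpow : (fun y : ℝ => max y 0 ^ (m + 1)) =ᶠ[𝓝 x] fun y => y ^ (m + 1) := by
      filter_upwards [eventually_gt_nhds hx] with y hy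
      simp [max_eq_left hy.le]
    simpa [max_eq_left hx.le] using (hasDerivAt_pow (m + 1) x).congr_of_eventuallyEq hpow

theorem contDiff_max_zero_pow (n : ℕ) : ContDiff ℝ n fun x : ℝ => max x 0 ^ (n + 1) := by
  induction n with
  | zero => simpa using continuous_id.max continuous_const
  | succ n ih =>
    have hderiv := hasDerivAt_max_zero_pow n.succ_ne_zero
    rw [Nat.cast_succ, contDiff_succ_iff_deriv]
    refine ⟨fun x => (hderiv x).differentiableAt, by simp, ?_⟩
    rw [funext fun x => (hderiv x).deriv]
    exact contDiff_const.mul ih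

section TaylorCondition

variable {R : Type*} [CommRing R]

theorem isRoot_iterate_derivative_one_sub_mul_X {p : R[X]} {K : ℕ}
    (hder : ∀ k ≤ K, (derivative^[k] p).eval 1 = (-1 : R) ^ k * (k.factorial : R)) :
    ∀ k ≤ K, (derivative^[k] (1 - p * X)).IsRoot 1 := by
  rintro (_ | k) hk
  · simpa [sub_eq_zero] using (hder 0 K.zero_le).symm
  · have hk' := hder k (by omega)
    rw [iterate_derivative_sub, iterate_derivative_one k.succ_pos, iterate_derivative_mul_X,
      IsRoot, eval_sub, eval_add, eval_mul, eval_smul, hder (k + 1) hk, Nat.add_sub_cancel, hk']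
    simp only [eval_zero, eval_X, nsmul_eq_mul, Nat.factorial_succ, pow_succ]
    push_cast
    ring

variable [IsDomain R] [CharZero R]

theorem one_sub_X_pow_dvd_one_sub_mul_X {p : R[X]} {K : ℕ}
    (hder : ∀ k ≤ K, (derivative^[k] p).eval 1 = (-1 : R) ^ k * (k.factorial : R)) :
    (1 - X) ^ (K + 1) ∣ 1 - p * X := by
  have hne : (1 - p * X : R[X]) ≠ 0 := fun h => by simpa using congrArg (eval 0) h
  have hmult := lt_rootMultiplicity_of_isRoot_iterate_derivative hne
    (isRoot_iterate_derivative_one_sub_mul_X hder)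
  have hassoc : (1 - X : R[X]) ∣ X - C 1 := ⟨-1, by simp⟩
  exact (pow_dvd_pow_of_dvd hassoc _).trans <|
    (pow_dvd_pow _ hmult).trans ((1 - p * X).pow_rootMultiplicity_dvd 1)

end TaylorCondition

theorem stmt_5 (K : ℕ) (p : Polynomial ℝ)
    (hder : ∀ k : ℕ, k ≤ K →
      (Polynomial.derivative^[k] p).eval 1 = (-1 : ℝ) ^ k * (Nat.factorial k : ℝ))
    (κ : ℝ → ℝ)
    (hκ : ∀ s : ℝ, 0 < s → κ s = if s < 1 then 1 / s - p.eval s else 0) :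
    ContDiffOn ℝ K κ (Set.Ioi 0) := by
  obtain ⟨r, hr⟩ := one_sub_X_pow_dvd_one_sub_mul_X hder
  have hsmooth :
      ContDiffOn ℝ K (fun s => max (1 - s) 0 ^ (K + 1) * (r.eval s / s)) (Set.Ioi 0) :=
    ((contDiff_max_zero_pow K).comp (contDiff_const.sub contDiff_id)).contDiffOn.mul
      ((r.contDiff_aeval K).contDiffOn.div contDiffOn_id fun s hs => ne_of_gt hs)
  refine hsmooth.congr fun s (hs : 0 < s) => ?_
  rw [hκ s hs]
  split_ifs with h
  · have hfactor : 1 - p.eval s * s = (1 - s) ^ (K + 1) * r.eval s := by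
      simpa using congrArg (eval s) hr
    rw [max_eq_left (by linarith), ← mul_div_assoc, ← hfactor]
    field_simp
  · rw [max_eq_right (by linarith), zero_pow K.succ_ne_zero, zero_mul]
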